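/- arXiv:2203.16709 — 3 statements merged into one kernel-verified Lean document; each statement's English description precedes it below -/
import Mathlib

section
/- Let D > 1 be a squarefree integer with D ≡ 1 or 2 (mod 4) such that every element of the ideal class group of ℚ(√−D) has order dividing 2. Let p be an odd prime with Legendre symbol (−D/p) = 1. Then the equation x² + Dy² = z² has exactly one normalized solution of the form (a, b, p): there exists exactly one pair of positive integers (a, b) with a² + Db² = p² and gcd(a, b, p) = 1. -/
/-!
Pick `t` with `t² ≡ -D (mod p)`. The ideal `𝔭 = (p, t + √-D)` of `ℤ[√-D]` satisfies
`𝔭 𝔭̄ = (p)`, so it is invertible, and since the class group has exponent two, `𝔭² = (α)`.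
Then `(α ᾱ) = 𝔭² 𝔭̄² = (p²)` gives `N(α) = p²`, i.e. a solution `(|Re α|, |Im α|)`; here
`Im α ≠ 0` because `α ∣ (t + √-D)²` while `p ∤ 2t`, and `Re α ≠ 0` because `p ∤ D`.

Uniqueness is elementary: for two solutions `(a, b)`, `(c, d)` we have
`(ad - bc)(ad + bc) = p²(d² - b²)`, and `p` divides only one factor. Since `ad, bc < p²`,
either `ad = bc`, which forces `(a, b) = (c, d)`, or `ad + bc = p²`, which contradicts
`(ac - Dbd)² + D(ad + bc)² = p⁴`.
-/

open Ideal
open scoped nonZeroDivisors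

theorem Ideal.span_pair_mul_span_pair_eq_span_singleton {R : Type*} [CommRing R] {p a b : R}
    (hab : p ∣ a * b) (hcop : IsCoprime p (a + b)) :
    span {p, a} * span {p, b} = span {p} := by
  rw [span_pair_mul_span_pair]
  apply le_antisymm
  · simp only [span_le, Set.insert_subset_iff, Set.singleton_subset_iff, SetLike.mem_coe,
      mem_span_singleton]
    exact ⟨dvd_mul_right _ _, dvd_mul_right _ _, dvd_mul_left _ _, hab⟩
  · obtain ⟨u, v, huv⟩ := hcop
    have hp : p = u * (p * p) + v * (p * b) + v * (a * p) := by linear_combination -p * huv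
    have hmem : u * (p * p) + v * (p * b) + v * (a * p) ∈ span {p * p, p * b, a * p, a * b} := by
      refine add_mem (add_mem ?_ ?_) ?_ <;> exact mul_mem_left _ _ (subset_span (by simp))
    rw [span_singleton_le_iff_mem]
    rwa [← hp] at hmem

theorem Ideal.exists_sq_eq_span_singleton_of_mul_eq_span_singleton {R : Type*} [CommRing R]
    [IsDomain R] (hclass : ∀ c : ClassGroup R, c ^ 2 = 1) {I J : Ideal R} {x : R} (hx : x ≠ 0)
    (hIJ : I * J = span {x}) : ∃ α : R, I ^ 2 = span {α} := by
  have hxK : algebraMap R (FractionRing R) x ≠ 0 :=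
    fun h => hx (IsFractionRing.to_map_eq_zero_iff.mp h)
  have hinv : (I : FractionalIdeal R⁰ (FractionRing R)) *
      (J * FractionalIdeal.spanSingleton R⁰ (algebraMap R (FractionRing R) x)⁻¹) = 1 := by
    rw [← mul_assoc, ← FractionalIdeal.coeIdeal_mul, hIJ, FractionalIdeal.coeIdeal_span_singleton,
      FractionalIdeal.spanSingleton_mul_spanSingleton, mul_inv_cancel₀ hxK,
      FractionalIdeal.spanSingleton_one]
  set U := Units.mkOfMulEqOne _ _ hinv
  have hU : ((U ^ 2 : (FractionalIdeal R⁰ (FractionRing R))ˣ) :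
      FractionalIdeal R⁰ (FractionRing R)) = ↑(I ^ 2) := by
    rw [Units.val_pow_eq_pow_val, FractionalIdeal.coeIdeal_pow]
    rfl
  have hsq := hclass (ClassGroup.mk (FractionRing R) U)
  rw [← map_pow, ClassGroup.mk_eq_one_of_coe_ideal hU] at hsq
  obtain ⟨α, -, hα⟩ := hsq
  exact ⟨α, hα⟩

namespace Zsqrtd

variable {d : ℤ}

theorem eq_of_span_intCast_eq {m n : ℤ} (hm : 0 ≤ m) (hn : 0 ≤ n)
    (h : span {(m : ℤ√d)} = span {(n : ℤ√d)}) : m = n :=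
  Int.dvd_antisymm hm hn ((intCast_dvd_intCast _ _).mp (span_singleton_le_span_singleton.mp h.ge))
    ((intCast_dvd_intCast _ _).mp (span_singleton_le_span_singleton.mp h.le))

theorem exists_norm_eq_sq_im_ne_zero (hd : d ≤ 0) [IsDomain (ℤ√d)]
    (hclass : ∀ c : ClassGroup (ℤ√d), c ^ 2 = 1) {p t : ℤ} (hp : 1 < p)
    (ht : p ∣ t ^ 2 - d) (hcop : IsCoprime p (2 * t)) :
    ∃ α : ℤ√d, α.norm = p ^ 2 ∧ α.im ≠ 0 := by
  set π : ℤ√d := ⟨t, 1⟩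
  set P := span {(p : ℤ√d), π}
  set Q := span {(p : ℤ√d), star π}
  have hPQ : P * Q = span {(p : ℤ√d)} := by
    refine span_pair_mul_span_pair_eq_span_singleton ?_ ?_
    · obtain ⟨m, hm⟩ := ht
      refine ⟨m, ?_⟩
      ext
      · simp [π]
        linear_combination hm
      · simp [π]
    · have h2t : π + star π = ((2 * t : ℤ) : ℤ√d) := by ext <;> simp [π, two_mul]
      rw [h2t]
      exact hcop.map (Int.castRingHom (ℤ√d))
  have hp0 : (p : ℤ√d) ≠ 0 := by
    intro h
    have := congrArg re h
    simp at this
    omega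
  obtain ⟨α, hα⟩ := exists_sq_eq_span_singleton_of_mul_eq_span_singleton hclass hp0 hPQ
  have hQ : Q ^ 2 = span {star α} := by
    have : Q = P.map (starRingEnd (ℤ√d)) := by
      simp [P, Q, map_span, Set.image_pair, starRingEnd_apply]
    rw [this, ← Ideal.map_pow, hα, map_span, Set.image_singleton, starRingEnd_apply]
  have hnorm : α.norm = p ^ 2 := by
    refine eq_of_span_intCast_eq (d := d) (norm_nonneg hd α) (sq_nonneg p) ?_
    calc span {(α.norm : ℤ√d)} = span {α} * span {star α} := by
          rw [norm_eq_mul_conj, span_singleton_mul_span_singleton]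
      _ = (P * Q) ^ 2 := by rw [← hα, ← hQ, mul_pow]
      _ = span {((p ^ 2 : ℤ) : ℤ√d)} := by rw [hPQ, span_singleton_pow, Int.cast_pow]
  refine ⟨α, hnorm, fun him => ?_⟩
  -- Otherwise `α = α.re` would divide `π ^ 2 ∈ P ^ 2`, whose imaginary part is `2 * t`.
  have hdvd : α.re ∣ 2 * t := by
    have hπ : α ∣ π ^ 2 := mem_span_singleton.mp (hα ▸ pow_mem_pow (subset_span (by simp)) 2)
    have hα_re : α = (α.re : ℤ√d) := by ext <;> simp [him]
    rw [hα_re, intCast_dvd] at hπ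
    simpa [π, sq, two_mul] using hπ.2
  have hre : α.re ^ 2 = p ^ 2 := by simpa [norm_def, him, sq] using hnorm
  have hunit : IsUnit α.re :=
    hcop.isUnit_of_dvd' ((Int.pow_dvd_pow_iff two_ne_zero).mp hre.dvd) hdvd
  rcases Int.isUnit_iff.mp hunit with h | h <;> rw [h] at hre <;> nlinarith

end Zsqrtd

theorem legendreSym.exists_dvd_sq_sub_of_eq_one {p : ℕ} [Fact p.Prime] {a : ℤ}
    (h : legendreSym p a = 1) : ∃ t : ℤ, (p : ℤ) ∣ t ^ 2 - a := by
  have ha : (a : ZMod p) ≠ 0 := fun h0 => by simp [(legendreSym.eq_zero_iff p a).mpr h0] at h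
  obtain ⟨y, hy⟩ := (legendreSym.eq_one_iff p ha).mp h
  obtain ⟨t, rfl⟩ := ZMod.intCast_surjective y
  exact ⟨t, (ZMod.intCast_eq_intCast_iff_dvd_sub _ _ _).mp (by push_cast; rw [hy, sq])⟩

theorem Int.isCoprime_two_mul_of_dvd_sq_sub {p : ℕ} (hp : p.Prime) (hp2 : p ≠ 2) {t a : ℤ}
    (ht : (p : ℤ) ∣ t ^ 2 - a) (ha : ¬ (p : ℤ) ∣ a) : IsCoprime (p : ℤ) (2 * t) := by
  have hpZ := Nat.prime_iff_prime_int.mp hp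
  rw [Prime.coprime_iff_not_dvd hpZ]
  intro h
  rcases hpZ.dvd_mul.mp h with h2 | htp
  · exact hp2 ((Nat.prime_dvd_prime_iff_eq hp Nat.prime_two).mp (Int.natCast_dvd_natCast.mp h2))
  · exact ha (by simpa using dvd_sub (dvd_pow htp two_ne_zero) ht)

theorem lt_of_sq_add_mul_sq_eq_sq {D a b p : ℕ} (hD : 0 < D) (ha : 0 < a) (hb : 0 < b)
    (h : a ^ 2 + D * b ^ 2 = p ^ 2) : a < p ∧ b < p := by
  constructor <;> nlinarith

theorem mul_sq_ne_sq_of_not_dvd {D b p : ℕ} (hD : 1 < D) (hp : p.Prime) (hpD : ¬ p ∣ D) :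
    D * b ^ 2 ≠ p ^ 2 := by
  intro h
  have hpb : p ∣ b :=
    hp.dvd_of_dvd_pow ((hp.dvd_mul.mp (h ▸ dvd_pow_self p two_ne_zero)).resolve_left hpD)
  have hb : b ≠ 0 := by
    rintro rfl
    exact pow_ne_zero 2 hp.ne_zero (by simpa using h.symm)
  have hpb' := Nat.pow_le_pow_left (Nat.le_of_dvd (Nat.pos_of_ne_zero hb) hpb) 2
  nlinarith [hp.pos]

theorem Nat.Prime.not_dvd_two_mul_mul {p a d : ℕ} (hp : p.Prime) (hp2 : p ≠ 2)
    (ha : 0 < a) (hap : a < p) (hd : 0 < d) (hdp : d < p) : ¬ p ∣ 2 * a * d := by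
  intro h
  rcases hp.dvd_mul.mp h with h2a | hpd
  · rcases hp.dvd_mul.mp h2a with hp2' | hpa
    · exact hp2 ((Nat.prime_dvd_prime_iff_eq hp Nat.prime_two).mp hp2')
    · exact absurd (Nat.le_of_dvd ha hpa) (by omega)
  · exact absurd (Nat.le_of_dvd hd hpd) (by omega)

theorem eq_of_sq_add_mul_sq_eq_sq {D p a b c d : ℕ} (hD : 1 < D) (hp : p.Prime) (hp2 : p ≠ 2)
    (ha : 0 < a) (hb : 0 < b) (hc : 0 < c) (hd : 0 < d)
    (h₁ : a ^ 2 + D * b ^ 2 = p ^ 2) (h₂ : c ^ 2 + D * d ^ 2 = p ^ 2) : a = c ∧ b = d := by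
  obtain ⟨hap, hbp⟩ := lt_of_sq_add_mul_sq_eq_sq (by omega) ha hb h₁
  obtain ⟨hcp, hdp⟩ := lt_of_sq_add_mul_sq_eq_sq (by omega) hc hd h₂
  have hpZ := Nat.prime_iff_prime_int.mp hp
  have h₁' : (a : ℤ) ^ 2 + D * b ^ 2 = p ^ 2 := by exact_mod_cast h₁
  have h₂' : (c : ℤ) ^ 2 + D * d ^ 2 = p ^ 2 := by exact_mod_cast h₂
  have hXY : (a * d - b * c : ℤ) * (a * d + b * c) = p ^ 2 * (d ^ 2 - b ^ 2) := by
    linear_combination (d : ℤ) ^ 2 * h₁' - (b : ℤ) ^ 2 * h₂'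
  have hnot : ¬ ((p : ℤ) ∣ a * d - b * c ∧ (p : ℤ) ∣ a * d + b * c) := by
    rintro ⟨hX, hY⟩
    have h2ad : ((2 * a * d : ℕ) : ℤ) = (a * d + b * c) + (a * d - b * c) := by push_cast; ring
    exact Nat.Prime.not_dvd_two_mul_mul hp hp2 ha hap hd hdp
      (Int.natCast_dvd_natCast.mp (h2ad ▸ dvd_add hY hX))
  by_cases hX : (p : ℤ) ∣ a * d - b * c
  · have hX2 := hpZ.pow_dvd_of_dvd_mul_right 2 (fun hY => hnot ⟨hX, hY⟩) ⟨_, hXY⟩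
    have hX0 : (a * d - b * c : ℤ) = 0 :=
      Int.eq_zero_of_abs_lt_dvd hX2 (abs_lt.mpr ⟨by nlinarith, by nlinarith⟩)
    have hbd : b = d := by
      have : (d : ℤ) ^ 2 = b ^ 2 := by
        rw [hX0, zero_mul, zero_eq_mul] at hXY
        exact sub_eq_zero.mp (hXY.resolve_left (pow_ne_zero 2 (by exact_mod_cast hp.ne_zero)))
      exact Nat.pow_left_injective two_ne_zero (by exact_mod_cast this.symm)
    subst hbd
    exact ⟨Nat.pow_left_injective two_ne_zero (Nat.add_right_cancel (h₁.trans h₂.symm)), rfl⟩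
  · obtain ⟨k, hk⟩ := hpZ.pow_dvd_of_dvd_mul_left 2 hX ⟨_, hXY⟩
    have hk1 : k = 1 := by
      have : 0 < k := by nlinarith
      have : k < 2 := by nlinarith
      omega
    have hprod : (a * c - D * b * d : ℤ) ^ 2 + D * (a * d + b * c) ^ 2 = p ^ 2 * p ^ 2 := by
      linear_combination ((c : ℤ) ^ 2 + D * d ^ 2) * h₁' + (p : ℤ) ^ 2 * h₂'
    rw [hk, hk1, mul_one] at hprod
    have hp4 : (0 : ℤ) < p ^ 4 := by have := hp.pos; positivity
    nlinarith [sq_nonneg (a * c - D * b * d : ℤ)]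

theorem exists_sq_add_mul_sq_eq_sq_of_classGroup {D : ℕ} (hD : 1 < D) [IsDomain (ℤ√(-(D : ℤ)))]
    (hclass : ∀ c : ClassGroup (ℤ√(-(D : ℤ))), c ^ 2 = 1) {p : ℕ} [Fact p.Prime] (hp2 : p ≠ 2)
    (hleg : legendreSym p (-(D : ℤ)) = 1) :
    ∃ a b : ℕ, 0 < a ∧ 0 < b ∧ a ^ 2 + D * b ^ 2 = p ^ 2 := by
  have hp : p.Prime := Fact.out
  have hpD : ¬ (p : ℤ) ∣ -(D : ℤ) := fun h => by
    simp [(legendreSym.eq_zero_iff p _).mpr ((ZMod.intCast_zmod_eq_zero_iff_dvd _ p).mpr h)] at hleg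
  obtain ⟨t, ht⟩ := legendreSym.exists_dvd_sq_sub_of_eq_one hleg
  obtain ⟨α, hnorm, him⟩ := Zsqrtd.exists_norm_eq_sq_im_ne_zero (by simp) hclass
    (by exact_mod_cast hp.one_lt) ht (Int.isCoprime_two_mul_of_dvd_sq_sub hp hp2 ht hpD)
  have hα : α.re.natAbs ^ 2 + D * α.im.natAbs ^ 2 = p ^ 2 := by
    zify
    rw [sq_abs, sq_abs, ← hnorm, Zsqrtd.norm_def]
    ring
  refine ⟨_, _, Nat.pos_of_ne_zero fun hre => ?_, Int.natAbs_pos.mpr him, hα⟩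
  refine mul_sq_ne_sq_of_not_dvd hD hp (fun h => hpD ?_) (by simpa [hre] using hα)
  exact (Int.natCast_dvd_natCast.mpr h).neg_right

theorem unique_normalized_solution_prime_general
    (D : ℕ) (hD : 1 < D)
    [IsDomain (ℤ√(-(D : ℤ)))]
    (hclass : ∀ x : ClassGroup (ℤ√(-(D : ℤ))), x ^ 2 = 1)
    (p : ℕ) (hp : p.Prime) (hpodd : p ≠ 2)
    (hleg : @legendreSym p ⟨hp⟩ (-(D : ℤ)) = 1) :
    ∃! ab : ℕ × ℕ, 0 < ab.1 ∧ 0 < ab.2 ∧ ab.1 ^ 2 + D * ab.2 ^ 2 = p ^ 2 ∧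
        Nat.gcd (Nat.gcd ab.1 ab.2) p = 1 := by
  have := Fact.mk hp
  obtain ⟨a, b, ha, hb, hab⟩ := exists_sq_add_mul_sq_eq_sq_of_classGroup hD hclass hpodd hleg
  refine ⟨(a, b), ⟨ha, hb, hab, ?_⟩, ?_⟩
  · have hap := (lt_of_sq_add_mul_sq_eq_sq (by omega) ha hb hab).1
    exact (Nat.coprime_of_lt_prime ha.ne' hap hp).symm.coprime_dvd_left (Nat.gcd_dvd_left a b)
  · rintro ⟨c, d⟩ ⟨hc, hd, hcd, -⟩
    obtain ⟨rfl, rfl⟩ := eq_of_sq_add_mul_sq_eq_sq hD hp hpodd hc hd ha hb hcd hab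
    rfl

/-- **Lemma 3.5 of [JMMM].**
Let `D > 1` be a squarefree integer with `D ≡ 1` or `2 (mod 4)` such that every element of the
ideal class group of `ℚ(√-D)` (equivalently, of `ℤ[√-D]`) has order dividing 2.  Let `p` be an
odd prime with Legendre symbol `(-D/p) = 1`.  Then `x² + D y² = z²` has exactly one normalized
solution of the form `(a, b, p)`: there is exactly one pair of positive integers `(a, b)` with
`a² + D b² = p²` and `gcd(a, b, p) = 1`. -/
theorem unique_normalized_solution_prime
    (D : ℕ) (hD : 1 < D) (hsf : Squarefree D) (hDmod : D % 4 = 1 ∨ D % 4 = 2)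
    [IsDomain (ℤ√(-(D : ℤ)))]
    (hclass : ∀ x : ClassGroup (ℤ√(-(D : ℤ))), x ^ 2 = 1)
    (p : ℕ) (hp : p.Prime) (hpodd : p ≠ 2)
    (hleg : @legendreSym p ⟨hp⟩ (-(D : ℤ)) = 1) :
    ∃! ab : ℕ × ℕ, 0 < ab.1 ∧ 0 < ab.2 ∧ ab.1 ^ 2 + D * ab.2 ^ 2 = p ^ 2 ∧
        Nat.gcd (Nat.gcd ab.1 ab.2) p = 1 :=
  unique_normalized_solution_prime_general D hD hclass p hp hpodd hleg
end

section
/- Let D > 1 be a squarefree integer with D ≡ 1 or 2 (mod 4) such that every element of the ideal class group of ℚ(√−D) has order dividing 2. Let a, b be integers with gcd(a, b) = 1 and let c > 1 be an odd integer with a² + Db² = c², and let c = p₁^{α₁} ⋯ p_k^{α_k} be the prime factorization of c into distinct primes. Then, writing z = (a + b·√D·i)/c ∈ ℂ, there exist a sign u ∈ {1, −1} and signs ε₁, …, ε_k ∈ {1, −1} such that z = u · ζ_{p₁}^{ε₁ α₁} ⋯ ζ_{p_k}^{ε_k α_k}. -/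
/-!
Work in `ℤ√-D`, where `α = a + b√-D` has norm `c²` and `π_p = x_p + y_p√-D` has norm `p²`.
For a prime `p ∣ c` the imaginary parts of `α π̄_p` and `α π_p` multiply to `b² p² - c² y_p²` and
add up to `2 b x_p`, so `p` divides exactly one of them; that one is then divisible by `p²`, and
so is the real part, because `α π̄_p` has norm `c² p²`. Hence `π_p ∣ α` or `π̄_p ∣ α`. Since
`π_p π̄_p = p²` cannot divide the primitive `α`, repeating this gives one `σ_p ∈ {π_p, π̄_p}` with
`σ_p ^ α_p ∣ α`. These powers have pairwise coprime norms, so their product divides `α`, with a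
cofactor of norm `1`, i.e. `±1`. Finally map `√-D ↦ √D i` into `ℂ` and divide by
`c = ∏ p ^ α_p`, using `π̄_p / p = (π_p / p)⁻¹`.
-/

namespace Zsqrtd

variable {d : ℤ}

theorem norm_pow (x : ℤ√d) (n : ℕ) : (x ^ n).norm = x.norm ^ n :=
  map_pow normMonoidHom x n

theorem norm_prod {ι : Type*} (s : Finset ι) (f : ι → ℤ√d) :
    (∏ i ∈ s, f i).norm = ∏ i ∈ s, (f i).norm :=
  map_prod normMonoidHom f s

theorem isCoprime_of_isCoprime_norm {x y : ℤ√d} (h : IsCoprime x.norm y.norm) : IsCoprime x y := by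
  have h' := h.map (Int.castRingHom (ℤ√d))
  simp only [eq_intCast, norm_eq_mul_conj] at h'
  exact h'.of_mul_left_left.of_mul_right_left

theorem eq_one_or_eq_neg_one_of_norm_eq_one (hd : d < -1) {x : ℤ√d} (h : x.norm = 1) :
    x = 1 ∨ x = -1 := by
  rw [norm_def] at h
  have him : x.im = 0 := by nlinarith [sq_nonneg x.re, sq_nonneg x.im]
  have hre : x.re * x.re = 1 := by simpa [him] using h
  rcases Int.isUnit_iff.mp (.of_mul_eq_one _ hre) with hre | hre
  · exact .inl (Zsqrtd.ext hre him)
  · exact .inr (Zsqrtd.ext hre him)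

theorem not_isCoprime_of_intCast_dvd {p : ℤ} (hp : ¬ IsUnit p) {x : ℤ√d} (h : (p : ℤ√d) ∣ x) :
    ¬ IsCoprime x.re x.im := fun hx =>
  hp (hx.isUnit_of_dvd' ((intCast_dvd p x).mp h).1 ((intCast_dvd p x).mp h).2)

theorem im_mul_star_mul_im_mul (β τ : ℤ√d) :
    (β * star τ).im * (β * τ).im = β.im ^ 2 * τ.norm - β.norm * τ.im ^ 2 := by
  simp only [norm_def, im_mul, re_star, im_star]
  ring

theorem dvd_of_dvd_im_mul_star {p : ℤ} (hp : Prime p) (hp2 : ¬ p ∣ 2) {τ β : ℤ√d}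
    (hτ : τ.norm = p ^ 2) (hτre : ¬ p ∣ τ.re) (hβ : IsCoprime β.re β.im) (hpβ : p ^ 2 ∣ β.norm)
    (h : p ∣ (β * star τ).im) : τ ∣ β := by
  have hpb : ¬ p ∣ β.im := fun hb => by
    have ha : p ∣ β.re ^ 2 := by
      rw [show β.re ^ 2 = β.norm + d * β.im * β.im by rw [norm_def]; ring]
      exact dvd_add (dvd_trans (dvd_pow_self p two_ne_zero) hpβ) (dvd_mul_of_dvd_right hb _)
    exact hp.not_isUnit (hβ.isUnit_of_dvd' (hp.dvd_of_dvd_pow ha) hb)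
  have hsum : (β * star τ).im + (β * τ).im = 2 * β.im * τ.re := by
    simp only [im_mul, re_star, im_star]; ring
  have hconj : ¬ p ∣ (β * τ).im := fun h' => by
    have h2 : p ∣ 2 * β.im * τ.re := hsum ▸ dvd_add h h'
    rcases hp.dvd_or_dvd h2 with h2 | h2
    · exact (hp.dvd_or_dvd h2).elim hp2 hpb
    · exact hτre h2
  have him : p ^ 2 ∣ (β * star τ).im := by
    refine ((hp.coprime_iff_not_dvd.mpr hconj).pow_left).dvd_of_dvd_mul_right ?_
    rw [im_mul_star_mul_im_mul, hτ]
    exact dvd_sub (dvd_mul_left _ _) (dvd_mul_of_dvd_left hpβ _)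
  have hre : p ^ 2 ∣ (β * star τ).re := by
    rw [← Int.pow_dvd_pow_iff two_ne_zero]
    have hnorm : (β * star τ).re ^ 2 = β.norm * p ^ 2 + d * (β * star τ).im ^ 2 := by
      have := norm_mul β (star τ)
      rw [norm_conj, hτ, norm_def (β * star τ)] at this
      linear_combination this
    rw [hnorm]
    exact dvd_add (sq (p ^ 2) ▸ mul_dvd_mul hpβ dvd_rfl)
      (dvd_mul_of_dvd_right (pow_dvd_pow_of_dvd him 2) _)
  obtain ⟨γ, hγ⟩ := (intCast_dvd (p ^ 2) (β * star τ)).mpr ⟨hre, him⟩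
  refine ⟨γ, Zsqrtd.eq_of_smul_eq_smul_left (pow_ne_zero 2 hp.ne_zero) ?_⟩
  calc ((p ^ 2 : ℤ) : ℤ√d) * β = β * star τ * τ := by
        rw [← hτ, norm_eq_mul_conj]; ring
    _ = ((p ^ 2 : ℤ) : ℤ√d) * (τ * γ) := by rw [hγ]; ring

theorem dvd_or_star_dvd {p : ℤ} (hp : Prime p) (hp2 : ¬ p ∣ 2) {τ β : ℤ√d}
    (hτ : τ.norm = p ^ 2) (hτre : ¬ p ∣ τ.re) (hβ : IsCoprime β.re β.im) (hpβ : p ^ 2 ∣ β.norm) :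
    τ ∣ β ∨ star τ ∣ β := by
  have hdvd : p ∣ (β * star τ).im * (β * τ).im := by
    rw [im_mul_star_mul_im_mul, hτ]
    exact dvd_sub (dvd_mul_of_dvd_right (dvd_pow_self p two_ne_zero) _)
      (dvd_mul_of_dvd_left (dvd_trans (dvd_pow_self p two_ne_zero) hpβ) _)
  rcases hp.dvd_or_dvd hdvd with h | h
  · exact .inl (dvd_of_dvd_im_mul_star hp hp2 hτ hτre hβ hpβ h)
  · refine .inr (dvd_of_dvd_im_mul_star hp hp2 (by rwa [norm_conj]) (by rwa [re_star]) hβ hpβ ?_)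
    rwa [star_star]

theorem exists_pow_dvd {p : ℤ} (hp : Prime p) (hp2 : ¬ p ∣ 2) {τ α : ℤ√d}
    (hτ : τ.norm = p ^ 2) (hτre : ¬ p ∣ τ.re) (hα : IsCoprime α.re α.im) :
    ∀ k : ℕ, (p ^ 2) ^ k ∣ α.norm → ∃ σ, (σ = τ ∨ σ = star τ) ∧ σ ^ k ∣ α
  | 0, _ => ⟨τ, .inl rfl, by simp⟩
  | k + 1, hk => by
    obtain ⟨σ, hστ, β, rfl⟩ := exists_pow_dvd hp hp2 hτ hτre hα k
      (dvd_trans (pow_dvd_pow _ k.le_succ) hk)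
    have hσ : σ.norm = p ^ 2 ∧ ¬ p ∣ σ.re := by
      rcases hστ with rfl | rfl
      · exact ⟨hτ, hτre⟩
      · rw [norm_conj, re_star]; exact ⟨hτ, hτre⟩
    have hβ : IsCoprime β.re β.im := isCoprime_of_dvd_isCoprime hα (dvd_mul_left β _)
    have hpβ : p ^ 2 ∣ β.norm := by
      rw [norm_mul, norm_pow, hσ.1, pow_succ] at hk
      exact (mul_dvd_mul_iff_left (pow_ne_zero _ (pow_ne_zero 2 hp.ne_zero))).mp hk
    rcases dvd_or_star_dvd hp hp2 hσ.1 hσ.2 hβ hpβ with h | h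
    · exact ⟨σ, hστ, by rw [pow_succ]; exact mul_dvd_mul_left _ h⟩
    · rcases k with _ | k
      · refine ⟨star σ, ?_, by simpa using h⟩
        rcases hστ with rfl | rfl
        · exact .inr rfl
        · exact .inl (star_star τ)
      -- otherwise `σ * star σ = p ^ 2` divides the primitive `α`
      · refine absurd hα (not_isCoprime_of_intCast_dvd (p := p ^ 2) ?_ ?_)
        · exact fun hu => hp.not_isUnit (isUnit_of_dvd_unit (dvd_pow_self p two_ne_zero) hu)
        · rw [← hσ.1, norm_eq_mul_conj]
          exact mul_dvd_mul (dvd_pow_self σ k.succ_ne_zero) h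

theorem exists_eq_sign_mul_prod_pow (hd : d < -1) {c : ℕ} (hc : Odd c) {α : ℤ√d}
    (hα : IsCoprime α.re α.im) (hN : α.norm = c ^ 2) (π : ℕ → ℤ√d)
    (hπ : ∀ p ∈ c.primeFactors, (π p).norm = p ^ 2 ∧ ¬ (p : ℤ) ∣ (π p).re) :
    ∃ (u : ℤ√d) (σ : ℕ → ℤ√d), (u = 1 ∨ u = -1) ∧
      (∀ p ∈ c.primeFactors, σ p = π p ∨ σ p = star (π p)) ∧
      α = u * ∏ p ∈ c.primeFactors, σ p ^ c.factorization p := by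
  have hpow : ∀ p ∈ c.primeFactors, ∃ σ, (σ = π p ∨ σ = star (π p)) ∧
      σ ^ c.factorization p ∣ α := by
    intro p hp
    have hpp := Nat.prime_of_mem_primeFactors hp
    refine exists_pow_dvd (Nat.prime_iff_prime_int.mp hpp) ?_ (hπ p hp).1 (hπ p hp).2 hα _ ?_
    · intro h2
      have hpodd : Odd p := hc.of_dvd_nat (Nat.dvd_of_mem_primeFactors hp)
      rw [(Nat.prime_dvd_prime_iff_eq hpp Nat.prime_two).mp (by exact_mod_cast h2)] at hpodd
      exact Nat.not_even_iff_odd.mpr hpodd even_two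
    · rw [hN, ← pow_mul, mul_comm, pow_mul]
      exact pow_dvd_pow_of_dvd (by exact_mod_cast Nat.ordProj_dvd c p) 2
  choose! σ hσ hσα using hpow
  have hσN : ∀ p ∈ c.primeFactors, (σ p).norm = p ^ 2 := by
    intro p hp
    rcases hσ p hp with h | h <;> rw [h]
    · exact (hπ p hp).1
    · rw [norm_conj]; exact (hπ p hp).1
  have hcop : (c.primeFactors : Set ℕ).Pairwise
      (Function.onFun IsCoprime fun p => σ p ^ c.factorization p) := by
    intro p hp q hq hpq
    apply isCoprime_of_isCoprime_norm
    rw [norm_pow, norm_pow, hσN p hp, hσN q hq]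
    have := (Nat.coprime_primes (Nat.prime_of_mem_primeFactors hp)
      (Nat.prime_of_mem_primeFactors hq)).mpr hpq
    exact ((Nat.isCoprime_iff_coprime.mpr this).pow).pow
  obtain ⟨β, hβ⟩ := Finset.prod_dvd_of_coprime hcop hσα
  have hβN : β.norm = 1 := by
    have hprod : (∏ p ∈ c.primeFactors, σ p ^ c.factorization p).norm = (c : ℤ) ^ 2 := by
      calc (∏ p ∈ c.primeFactors, σ p ^ c.factorization p).norm
          = ∏ p ∈ c.primeFactors, ((p : ℤ) ^ c.factorization p) ^ 2 := by
            rw [norm_prod]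
            refine Finset.prod_congr rfl fun p hp => ?_
            rw [norm_pow, hσN p hp, ← pow_mul, ← pow_mul, mul_comm]
        _ = (c : ℤ) ^ 2 := by
            rw [Finset.prod_pow]
            exact_mod_cast
              congrArg (· ^ 2) (Nat.prod_primeFactors_pow_factorization hc.pos.ne').symm
    have := congrArg norm hβ
    rw [hN, norm_mul, hprod] at this
    exact (mul_eq_left₀ (pow_ne_zero 2 (by exact_mod_cast hc.pos.ne'))).mp this.symm
  exact ⟨β, σ, eq_one_or_eq_neg_one_of_norm_eq_one hd hβN, hσ, hβ.trans (mul_comm _ _)⟩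

section Map

variable {K : Type*} [Field K] [CharZero K] (φ : ℤ√d →+* K)

theorem map_star_div_eq_inv {τ : ℤ√d} {n : ℕ} (hn : n ≠ 0) (hτ : τ.norm = n ^ 2) :
    φ (star τ) / n = (φ τ / n)⁻¹ := by
  have h : φ τ * φ (star τ) = (n : K) ^ 2 := by
    rw [← map_mul, ← norm_eq_mul_conj, hτ]; simp
  have hτ0 : φ τ ≠ 0 := fun h0 =>
    pow_ne_zero 2 (Nat.cast_ne_zero.mpr hn) (by rw [← h, h0, zero_mul])
  field_simp
  linear_combination h

theorem exists_map_div_eq_mul_prod_zpow {c : ℕ} (hc : c ≠ 0) {α u : ℤ√d} {π σ : ℕ → ℤ√d}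
    (hπ : ∀ p ∈ c.primeFactors, (π p).norm = p ^ 2)
    (hσ : ∀ p ∈ c.primeFactors, σ p = π p ∨ σ p = star (π p))
    (h : α = u * ∏ p ∈ c.primeFactors, σ p ^ c.factorization p) :
    ∃ ε : ℕ → ℤ, (∀ p ∈ c.primeFactors, ε p = 1 ∨ ε p = -1) ∧
      φ α / c = φ u * ∏ p ∈ c.primeFactors, (φ (π p) / p) ^ (ε p * (c.factorization p : ℤ)) := by
  classical
  refine ⟨fun p => if σ p = π p then 1 else -1,
    fun p _ => by by_cases hσπ : σ p = π p <;> simp [hσπ], ?_⟩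
  have hσ' : ∀ p ∈ c.primeFactors,
      φ (σ p) / p = (φ (π p) / p) ^ (if σ p = π p then 1 else -1 : ℤ) := by
    intro p hp
    split_ifs with hσπ
    · rw [hσπ, zpow_one]
    · rw [(hσ p hp).resolve_left hσπ, zpow_neg_one,
        map_star_div_eq_inv φ (Nat.prime_of_mem_primeFactors hp).ne_zero (hπ p hp)]
  have hcK : (c : K) = ∏ p ∈ c.primeFactors, (p : K) ^ c.factorization p := by
    exact_mod_cast Nat.prod_primeFactors_pow_factorization hc
  rw [h, hcK, map_mul, map_prod, mul_div_assoc, ← Finset.prod_div_distrib]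
  congr 1
  refine Finset.prod_congr rfl fun p hp => ?_
  rw [map_pow, ← div_pow, hσ' p hp, zpow_mul, zpow_natCast]

end Map

end Zsqrtd

theorem Nat.not_dvd_of_sq_add_mul_sq_eq_sq {D x y p : ℕ} (hD : 0 < D) (hp : 1 < p) (hx : 0 < x)
    (h : x ^ 2 + D * y ^ 2 = p ^ 2) (hgcd : Nat.gcd (Nat.gcd x y) p = 1) : ¬ p ∣ x := by
  intro hpx
  have hyp : Nat.Coprime y p := Nat.dvd_one.mp <| hgcd ▸ Nat.dvd_gcd
    (Nat.dvd_gcd ((Nat.gcd_dvd_right y p).trans hpx) (Nat.gcd_dvd_left y p)) (Nat.gcd_dvd_right y p)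
  have hy : 0 < y := Nat.pos_of_ne_zero fun hy0 => by simp [hy0] at hyp; omega
  have hpD : p ^ 2 ∣ D := (Nat.Coprime.pow 2 2 hyp).symm.dvd_of_dvd_mul_right <|
    (Nat.dvd_add_right (pow_dvd_pow_of_dvd hpx 2)).mp (h ▸ dvd_rfl)
  have := Nat.le_of_dvd hD hpD
  nlinarith [Nat.mul_le_mul this (Nat.one_le_pow 2 y hy), pow_pos hx 2]

theorem factorization_in_G_D_general
    (D : ℕ) (hD : 1 < D)
    (a b : ℤ) (hab : Int.gcd a b = 1)
    (c : ℕ) (hcodd : Odd c)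
    (heq : a ^ 2 + (D : ℤ) * b ^ 2 = (c : ℤ) ^ 2)
    (x y : ℕ → ℕ)
    (hxy : ∀ p ∈ c.primeFactors, 0 < x p ∧ 0 < y p ∧
        (x p) ^ 2 + D * (y p) ^ 2 = p ^ 2 ∧ Nat.gcd (Nat.gcd (x p) (y p)) p = 1) :
    ∃ (u : ℂ) (ε : ℕ → ℤ), (u = 1 ∨ u = -1) ∧ (∀ p ∈ c.primeFactors, ε p = 1 ∨ ε p = -1) ∧
      ((a : ℂ) + (b : ℂ) * (Real.sqrt D : ℂ) * Complex.I) / (c : ℂ) =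
        u * ∏ p ∈ c.primeFactors,
          (((x p : ℂ) + (y p : ℂ) * (Real.sqrt D : ℂ) * Complex.I) / (p : ℂ))
            ^ (ε p * (c.factorization p : ℤ)) := by
  have hπ : ∀ p ∈ c.primeFactors,
      (⟨x p, y p⟩ : ℤ√(-(D : ℤ))).norm = p ^ 2 ∧ ¬ (p : ℤ) ∣ x p := by
    intro p hp
    obtain ⟨hx, -, hnorm, hgcd⟩ := hxy p hp
    have hnormZ : (x p : ℤ) ^ 2 + D * (y p : ℤ) ^ 2 = (p : ℤ) ^ 2 := by exact_mod_cast hnorm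
    refine ⟨by rw [Zsqrtd.norm_def]; linear_combination hnormZ, ?_⟩
    exact_mod_cast Nat.not_dvd_of_sq_add_mul_sq_eq_sq (by omega)
      (Nat.prime_of_mem_primeFactors hp).one_lt hx hnorm hgcd
  obtain ⟨u, σ, hu, hσ, hα⟩ := Zsqrtd.exists_eq_sign_mul_prod_pow (by omega) hcodd
    (α := ⟨a, b⟩) (Int.isCoprime_iff_gcd_eq_one.mpr hab)
    (by rw [Zsqrtd.norm_def]; linear_combination heq) _ hπ
  have hsqrt : (Real.sqrt D * Complex.I : ℂ) * (Real.sqrt D * Complex.I) = ((-D : ℤ) : ℂ) := by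
    rw [mul_mul_mul_comm, ← Complex.ofReal_mul, Real.mul_self_sqrt (Nat.cast_nonneg D),
      Complex.I_mul_I]
    push_cast
    ring
  obtain ⟨ε, hε, hz⟩ := Zsqrtd.exists_map_div_eq_mul_prod_zpow (Zsqrtd.lift ⟨_, hsqrt⟩)
    hcodd.pos.ne' (fun p hp => (hπ p hp).1) hσ hα
  refine ⟨Zsqrtd.lift ⟨_, hsqrt⟩ u, ε, by rcases hu with rfl | rfl <;> simp, hε, ?_⟩
  simpa [mul_assoc] using hz

/-- **Theorem 3.6 of [JMMM].**
Let `D > 1` be a squarefree integer with `D ≡ 1` or `2 (mod 4)` such that every element of the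
ideal class group of `ℚ(√-D)` (equivalently, of `ℤ[√-D]`) has order dividing 2.  Let `a, b` be
coprime integers and `c > 1` an odd integer with `a² + D b² = c²`, and let
`c = p₁^{α₁} ⋯ p_k^{α_k}` be the prime factorization of `c` (the primes being
`c.primeFactors` and the exponents `c.factorization p`).  For each prime `p ∣ c` let
`(x p, y p)` be positive integers with `(x p)² + D (y p)² = p²` and `gcd(x p, y p, p) = 1`,
and set `ζ_p = (x p + y p · √D · i) / p ∈ ℂ`.  Then, writing `z = (a + b √D i)/c ∈ ℂ`, there
are a sign `u ∈ {1, -1}` and signs `ε p ∈ {1, -1}` such that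
`z = u · ∏_{p ∣ c} ζ_p ^ (ε p · α p)`. -/
theorem factorization_in_G_D
    (D : ℕ) (hD : 1 < D) (hsf : Squarefree D) (hDmod : D % 4 = 1 ∨ D % 4 = 2)
    [IsDomain (ℤ√(-(D : ℤ)))]
    (hclass : ∀ x : ClassGroup (ℤ√(-(D : ℤ))), x ^ 2 = 1)
    (a b : ℤ) (hab : Int.gcd a b = 1)
    (c : ℕ) (hc : 1 < c) (hcodd : Odd c)
    (heq : a ^ 2 + (D : ℤ) * b ^ 2 = (c : ℤ) ^ 2)
    (x y : ℕ → ℕ)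
    (hxy : ∀ p ∈ c.primeFactors, 0 < x p ∧ 0 < y p ∧
        (x p) ^ 2 + D * (y p) ^ 2 = p ^ 2 ∧ Nat.gcd (Nat.gcd (x p) (y p)) p = 1) :
    ∃ (u : ℂ) (ε : ℕ → ℤ), (u = 1 ∨ u = -1) ∧ (∀ p ∈ c.primeFactors, ε p = 1 ∨ ε p = -1) ∧
      ((a : ℂ) + (b : ℂ) * (Real.sqrt D : ℂ) * Complex.I) / (c : ℂ) =
        u * ∏ p ∈ c.primeFactors,
          (((x p : ℂ) + (y p : ℂ) * (Real.sqrt D : ℂ) * Complex.I) / (p : ℂ))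
            ^ (ε p * (c.factorization p : ℤ)) :=
  factorization_in_G_D_general D hD a b hab c hcodd heq x y hxy
end

section
/- Let D > 1 be a squarefree integer with D ≡ 1 or 2 (mod 4) such that every element of the ideal class group of ℚ(√−D) has order dividing 2. Let p₁, …, p_k be distinct odd primes with Legendre symbol (−D/pᵢ) = 1, let α₁, …, α_k be positive integers, let u ∈ {1, −1} and ε₁, …, ε_k ∈ {1, −1}, and set z = u · ζ_{p₁}^{ε₁ α₁} ⋯ ζ_{p_k}^{ε_k α_k} ∈ ℂ. If z = (a + b·√D·i)/c where (a, b, c) is a normalized solution of x² + Dy² = z² (i.e., a, b, c positive integers, a² + Db² = c², gcd(a, b, c) = 1) up to the signs of a and b, then c = p₁^{α₁} ⋯ p_k^{α_k}. -/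
open Complex

/-!
Write `ζ_p = π / p` with `π = x + y√-D ∈ ℤ[√-D]` of norm `p²`. Then `z = w / P` with
`w = ±∏ πᵢ ^ αᵢ` (taking the conjugate of `πᵢ` when `εᵢ = -1`) and `P = ∏ pᵢ ^ αᵢ`, and comparing
with `z = (±a ± b√-D) / c` gives `c • w = P • (±a ± b√-D)` in `ℤ[√-D]`, so
`c · gcd(w) = P · gcd(a, b) = P`. It remains to see that no `pⱼ` divides `w`. As `-D` is a
nonzero square `r²` mod `pⱼ`, there are two maps `ℤ[√-D] → 𝔽_{pⱼ}`, `√-D ↦ ±r`. If one of them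
kills `w`, it kills some `πᵢ`, so `pⱼ ∣ N(πᵢ) = pᵢ²` and `i = j`; if both kill `πⱼ`, then
`pⱼ ∣ πⱼ`, against `gcd(xⱼ, yⱼ, pⱼ) = 1`.
-/

theorem Nat.gcd_eq_one_of_sq_add_mul_sq_eq_sq {a b c D : ℕ} (h : a ^ 2 + D * b ^ 2 = c ^ 2)
    (hgcd : Nat.gcd (Nat.gcd a b) c = 1) : Nat.gcd a b = 1 := by
  have hdvd : Nat.gcd a b ∣ c := by
    rw [← Nat.pow_dvd_pow_iff two_ne_zero, ← h]
    exact dvd_add (pow_dvd_pow_of_dvd (Nat.gcd_dvd_left a b) 2)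
      ((pow_dvd_pow_of_dvd (Nat.gcd_dvd_right a b) 2).mul_left D)
  rwa [Nat.gcd_eq_left hdvd] at hgcd

theorem legendreSym.exists_ne_zero_mul_self_eq (p : ℕ) [Fact p.Prime] {a : ℤ}
    (h : legendreSym p a = 1) : ∃ r : ZMod p, r ≠ 0 ∧ r * r = a := by
  have ha : (a : ZMod p) ≠ 0 := fun ha => by simp [(legendreSym.eq_zero_iff p a).mpr ha] at h
  obtain ⟨r, hr⟩ := (legendreSym.eq_one_iff p ha).mp h
  exact ⟨r, by rintro rfl; simp_all, hr.symm⟩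

namespace Zsqrtd

variable {d : ℤ}

theorem natCast_dvd (n : ℕ) (a : ℤ√d) : (n : ℤ√d) ∣ a ↔ (n : ℤ) ∣ a.re ∧ (n : ℤ) ∣ a.im := by
  exact_mod_cast intCast_dvd (n : ℤ) a

theorem not_natCast_dvd_mk {p x y : ℕ} (hp : p.Prime) (hxyp : Nat.gcd (Nat.gcd x y) p = 1)
    {ε : ℤ} (hε : ε = 1 ∨ ε = -1) : ¬ (p : ℤ√d) ∣ ⟨x, ε * y⟩ := by
  rw [natCast_dvd]
  rintro ⟨hx, hy⟩
  have hy : (p : ℤ) ∣ y := by rcases hε with rfl | rfl <;> simpa using hy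
  have := Nat.dvd_gcd (Nat.dvd_gcd (Int.natCast_dvd_natCast.mp hx)
    (Int.natCast_dvd_natCast.mp hy)) (dvd_refl p)
  rw [hxyp] at this
  exact hp.not_dvd_one this

theorem eq_of_natCast_mul_eq_natCast_mul {c n : ℕ} {w v : ℤ√d} (h : (c : ℤ√d) * w = n * v)
    (hv : Int.gcd v.re v.im = 1) (hw : Nat.Coprime n (Int.gcd w.re w.im)) : c = n := by
  have hre : (c : ℤ) * w.re = n * v.re := by simpa using congrArg re h
  have him : (c : ℤ) * w.im = n * v.im := by simpa using congrArg im h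
  have hcn : c * Int.gcd w.re w.im = n := by
    simpa [Int.gcd_mul_left, hv] using congrArg₂ Int.gcd hre him
  have hw1 : Int.gcd w.re w.im = 1 := hw.symm.eq_one_of_dvd (Dvd.intro_left c hcn)
  rw [← hcn, hw1, mul_one]

theorem coprime_prod_pow_gcd_re_im {ι : Type*} [Fintype ι] {p : ι → ℕ} (hp : ∀ i, (p i).Prime)
    {w : ℤ√d} (hw : ∀ i, ¬ (p i : ℤ√d) ∣ w) (α : ι → ℕ) :
    Nat.Coprime (∏ i, p i ^ α i) (Int.gcd w.re w.im) := by
  refine Nat.Coprime.prod_left fun i _ => Nat.Coprime.pow_left _ ?_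
  rw [(hp i).coprime_iff_not_dvd]
  intro hi
  apply hw i
  rw [natCast_dvd]
  exact ⟨(Int.natCast_dvd_natCast.mpr hi).trans (Int.gcd_dvd_left _ _),
    (Int.natCast_dvd_natCast.mpr hi).trans (Int.gcd_dvd_right _ _)⟩

section ZMod

variable {p : ℕ}

theorem lift_eq_zero_of_natCast_dvd (r : {r : ZMod p // r * r = d}) {q : ℤ√d}
    (h : (p : ℤ√d) ∣ q) : lift r q = 0 := by
  obtain ⟨q', rfl⟩ := h
  rw [map_mul, map_natCast, ZMod.natCast_self, zero_mul]

theorem natCast_dvd_norm_of_lift_eq_zero (r : {r : ZMod p // r * r = d}) {q : ℤ√d}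
    (h : lift r q = 0) : (p : ℤ) ∣ q.norm := by
  rw [← ZMod.intCast_zmod_eq_zero_iff_dvd, ← map_intCast (lift r), norm_eq_mul_conj, map_mul, h,
    zero_mul]

theorem natCast_dvd_of_lift_eq_zero_of_lift_neg_eq_zero [Fact p.Prime] (hp : p ≠ 2) {r : ZMod p}
    (hr0 : r ≠ 0) (hr : r * r = d) {q : ℤ√d} (h₁ : lift ⟨r, hr⟩ q = 0)
    (h₂ : lift ⟨-r, by rw [neg_mul_neg, hr]⟩ q = 0) : (p : ℤ√d) ∣ q := by
  have h2 : (2 : ZMod p) ≠ 0 := Ring.two_ne_zero (by rwa [ZMod.ringChar_zmod_n])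
  rw [lift_apply_apply] at h₁ h₂
  have hre : (q.re : ZMod p) = 0 := by
    have : (2 : ZMod p) * q.re = 0 := by linear_combination h₁ + h₂
    simpa [h2] using this
  have him : (q.im : ZMod p) = 0 := by
    have : (2 * r : ZMod p) * q.im = 0 := by linear_combination h₁ - h₂
    simpa [h2, hr0] using this
  rw [ZMod.intCast_zmod_eq_zero_iff_dvd] at hre him
  exact (natCast_dvd p q).mpr ⟨hre, him⟩

variable {ι : Type*} [Fintype ι] {p : ι → ℕ} {π : ι → ℤ√d}

theorem lift_eq_zero_of_natCast_dvd_unit_mul_prod (hp : ∀ i, (p i).Prime)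
    (hinj : Function.Injective p) (hnorm : ∀ i, (π i).norm = p i ^ 2) (α : ι → ℕ) (u : (ℤ√d)ˣ)
    {j : ι} (hj : (p j : ℤ√d) ∣ u * ∏ i, π i ^ α i) (r : {r : ZMod (p j) // r * r = d}) :
    lift r (π j) = 0 := by
  have : Fact (p j).Prime := ⟨hp j⟩
  have hw := lift_eq_zero_of_natCast_dvd r hj
  rw [map_mul, map_prod, mul_eq_zero, or_iff_right ((u.isUnit.map (lift r)).ne_zero),
    Finset.prod_eq_zero_iff] at hw
  obtain ⟨i, -, hi⟩ := hw
  rw [map_pow] at hi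
  have hi := eq_zero_of_pow_eq_zero hi
  have hdvd : p j ∣ p i ^ 2 := by
    exact_mod_cast (hnorm i) ▸ natCast_dvd_norm_of_lift_eq_zero r hi
  obtain rfl : j = i :=
    hinj ((Nat.prime_dvd_prime_iff_eq (hp j) (hp i)).mp ((hp j).dvd_of_dvd_pow hdvd))
  exact hi

theorem not_natCast_dvd_unit_mul_prod (hp : ∀ i, (p i).Prime) (hodd : ∀ i, p i ≠ 2)
    (hinj : Function.Injective p) (hnorm : ∀ i, (π i).norm = p i ^ 2)
    (hsq : ∀ i, ∃ r : ZMod (p i), r ≠ 0 ∧ r * r = d) (hprim : ∀ i, ¬ (p i : ℤ√d) ∣ π i)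
    (α : ι → ℕ) (u : (ℤ√d)ˣ) (j : ι) : ¬ (p j : ℤ√d) ∣ u * ∏ i, π i ^ α i := fun hj => by
  have : Fact (p j).Prime := ⟨hp j⟩
  obtain ⟨r, hr0, hr⟩ := hsq j
  exact hprim j (natCast_dvd_of_lift_eq_zero_of_lift_neg_eq_zero (hodd j) hr0 hr
    (lift_eq_zero_of_natCast_dvd_unit_mul_prod hp hinj hnorm α u hj _)
    (lift_eq_zero_of_natCast_dvd_unit_mul_prod hp hinj hnorm α u hj _))

end ZMod

variable {D : ℕ}

theorem norm_mk_neg_natCast (x y : ℤ) : (⟨x, y⟩ : ℤ√(-(D : ℤ))).norm = x ^ 2 + D * y ^ 2 := by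
  rw [norm_def]
  ring

noncomputable def toComplex (D : ℕ) : ℤ√(-(D : ℤ)) →+* ℂ :=
  lift ⟨Real.sqrt D * I, by
    rw [mul_mul_mul_comm, ← ofReal_mul, Real.mul_self_sqrt (Nat.cast_nonneg D), I_mul_I]
    push_cast
    ring⟩

theorem toComplex_apply (q : ℤ√(-(D : ℤ))) : toComplex D q = q.re + q.im * Real.sqrt D * I := by
  rw [toComplex, lift_apply_apply, mul_assoc]

theorem toComplex_mk_natCast (x y : ℕ) :
    toComplex D ⟨x, y⟩ = x + y * Real.sqrt D * I := by
  rw [toComplex_apply]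
  push_cast
  rfl

theorem toComplex_injective (hD : 0 < D) : Function.Injective (toComplex D) :=
  lift_injective _ fun n h => by nlinarith [mul_self_nonneg n]

theorem natCast_mul_eq_natCast_mul_of_toComplex_div_eq (hD : 0 < D) {c n : ℕ} (hc : c ≠ 0)
    (hn : n ≠ 0) {w v : ℤ√(-(D : ℤ))} (h : toComplex D w / n = toComplex D v / c) :
    (c : ℤ√(-(D : ℤ))) * w = n * v := by
  rw [div_eq_div_iff (Nat.cast_ne_zero.mpr hn) (Nat.cast_ne_zero.mpr hc)] at h
  apply toComplex_injective hD
  rw [map_mul, map_mul, map_natCast, map_natCast]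
  linear_combination h

theorem toComplex_div_zpow_sign_mul (q : ℤ√(-(D : ℤ))) {n : ℕ} (hn : n ≠ 0)
    (hq : q.norm = n ^ 2) {ε : ℤ} (hε : ε = 1 ∨ ε = -1) (α : ℕ) :
    (toComplex D q / n) ^ (ε * α) = (toComplex D ⟨q.re, ε * q.im⟩ / n) ^ α := by
  rcases hε with rfl | rfl
  · simp
  · have hstar : (⟨q.re, -1 * q.im⟩ : ℤ√(-(D : ℤ))) = star q := by ext <;> simp
    have hinv : (toComplex D q / n)⁻¹ = toComplex D (star q) / n := by
      refine inv_eq_of_mul_eq_one_right ?_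
      have hn' : (n : ℂ) ≠ 0 := Nat.cast_ne_zero.mpr hn
      rw [div_mul_div_comm, ← map_mul, ← norm_eq_mul_conj, hq]
      field_simp
      simp
    rw [neg_one_mul, zpow_neg, zpow_natCast, ← inv_pow, hinv, hstar]

theorem prod_toComplex_div_zpow_sign_mul {ι : Type*} [Fintype ι] (q : ι → ℤ√(-(D : ℤ)))
    {n : ι → ℕ} (hn : ∀ i, n i ≠ 0) (hq : ∀ i, (q i).norm = n i ^ 2) {ε : ι → ℤ}
    (hε : ∀ i, ε i = 1 ∨ ε i = -1) (α : ι → ℕ) :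
    ∏ i, (toComplex D (q i) / n i) ^ (ε i * α i) =
      toComplex D (∏ i, ⟨(q i).re, ε i * (q i).im⟩ ^ α i) / ∏ i, (n i : ℂ) ^ α i := by
  simp_rw [toComplex_div_zpow_sign_mul _ (hn _) (hq _) (hε _), div_pow, Finset.prod_div_distrib,
    map_prod, map_pow]

end Zsqrtd

open Zsqrtd in
theorem c_of_zeta_product_general
    (D : ℕ) (hD : 1 < D)
    (k : ℕ) (p : Fin k → ℕ) (hp : ∀ i, (p i).Prime) (hpodd : ∀ i, p i ≠ 2)
    (hpdist : Function.Injective p)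
    (hleg : ∀ i, @legendreSym (p i) ⟨hp i⟩ (-(D : ℤ)) = 1)
    (x y : Fin k → ℕ)
    (hxy : ∀ i, 0 < x i ∧ 0 < y i ∧ (x i) ^ 2 + D * (y i) ^ 2 = (p i) ^ 2 ∧
        Nat.gcd (Nat.gcd (x i) (y i)) (p i) = 1)
    (α : Fin k → ℕ)
    (u : ℂ) (hu : u = 1 ∨ u = -1)
    (ε : Fin k → ℤ) (hε : ∀ i, ε i = 1 ∨ ε i = -1)
    (a b c : ℕ) (hc : 0 < c)
    (habc : a ^ 2 + D * b ^ 2 = c ^ 2) (hgcd : Nat.gcd (Nat.gcd a b) c = 1)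
    (s t : ℤ) (hs : s = 1 ∨ s = -1) (ht : t = 1 ∨ t = -1)
    (hz : u * ∏ i,
        (((x i : ℂ) + (y i : ℂ) * (Real.sqrt D : ℂ) * Complex.I) / (p i : ℂ)) ^ (ε i * (α i : ℤ))
      = (((s * a : ℤ) : ℂ) + ((t * b : ℤ) : ℂ) * (Real.sqrt D : ℂ) * Complex.I) / (c : ℂ)) :
    c = ∏ i, (p i) ^ (α i) := by
  have hnorm_xy (i : Fin k) : (⟨x i, y i⟩ : ℤ√(-(D : ℤ))).norm = p i ^ 2 := by
    rw [norm_mk_neg_natCast]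
    exact_mod_cast (hxy i).2.2.1
  have hnorm (i : Fin k) : (⟨x i, ε i * y i⟩ : ℤ√(-(D : ℤ))).norm = p i ^ 2 := by
    rw [← hnorm_xy i, norm_mk_neg_natCast, norm_mk_neg_natCast]
    rcases hε i with h | h <;> simp [h]
  obtain ⟨η, rfl⟩ : ∃ η : (ℤ√(-(D : ℤ)))ˣ, toComplex D η = u := by
    rcases hu with rfl | rfl
    exacts [⟨1, map_one _⟩, ⟨-1, by simp⟩]
  simp only [← toComplex_mk_natCast, ← toComplex_apply ⟨s * a, t * b⟩,
    prod_toComplex_div_zpow_sign_mul _ (fun i => (hp i).ne_zero) hnorm_xy hε] at hz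
  have hw : toComplex D (η * ∏ i, (⟨x i, ε i * y i⟩ : ℤ√(-(D : ℤ))) ^ α i) /
      (∏ i, p i ^ α i : ℕ) = toComplex D ⟨s * a, t * b⟩ / c := by
    rw [map_mul, mul_div_assoc, ← hz]
    push_cast
    rfl
  have hcw := natCast_mul_eq_natCast_mul_of_toComplex_div_eq (by omega) hc.ne'
    (Finset.prod_ne_zero_iff.mpr fun i _ => pow_ne_zero _ (hp i).ne_zero) hw
  refine eq_of_natCast_mul_eq_natCast_mul hcw ?_ (coprime_prod_pow_gcd_re_im hp
    (not_natCast_dvd_unit_mul_prod hp hpodd hpdist hnorm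
      (fun i => @legendreSym.exists_ne_zero_mul_self_eq (p i) ⟨hp i⟩ _ (hleg i))
      (fun i => not_natCast_dvd_mk (hp i) (hxy i).2.2.2 (hε i)) α η) α)
  have hab := Nat.gcd_eq_one_of_sq_add_mul_sq_eq_sq habc hgcd
  rcases hs with rfl | rfl <;> rcases ht with rfl | rfl <;>
    simpa [Int.gcd_eq_natAbs_gcd_natAbs] using hab

/-- **Theorem 3.9 of [JMMM].**
Let `D > 1` be a squarefree integer with `D ≡ 1` or `2 (mod 4)` such that every element of the
ideal class group of `ℚ(√-D)` (equivalently, of `ℤ[√-D]`) has order dividing 2.  Let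
`p 0, …, p (k-1)` be distinct odd primes with Legendre symbol `(-D / p i) = 1`, with
`ζ_{p i} = (x i + y i · √D · i)/(p i)` built from the unique positive solution
`(x i)² + D (y i)² = (p i)²`, `gcd(x i, y i, p i) = 1`.  Let `α i ≥ 1`, `u ∈ {1, -1}`,
`ε i ∈ {1, -1}`, and set `z = u · ∏ i, ζ_{p i} ^ (ε i · α i)`.  If
`z = (±a + ±b·√D·i)/c` where `(a, b, c)` is a normalized solution of `x² + D y² = z²`
(positive integers, `a² + D b² = c²`, `gcd(a, b, c) = 1`), then
`c = ∏ i, (p i) ^ (α i)`. -/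
theorem c_of_zeta_product
    (D : ℕ) (hD : 1 < D) (hsf : Squarefree D) (hDmod : D % 4 = 1 ∨ D % 4 = 2)
    [IsDomain (ℤ√(-(D : ℤ)))]
    (hclass : ∀ x : ClassGroup (ℤ√(-(D : ℤ))), x ^ 2 = 1)
    (k : ℕ) (p : Fin k → ℕ) (hp : ∀ i, (p i).Prime) (hpodd : ∀ i, p i ≠ 2)
    (hpdist : Function.Injective p)
    (hleg : ∀ i, @legendreSym (p i) ⟨hp i⟩ (-(D : ℤ)) = 1)
    (x y : Fin k → ℕ)
    (hxy : ∀ i, 0 < x i ∧ 0 < y i ∧ (x i) ^ 2 + D * (y i) ^ 2 = (p i) ^ 2 ∧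
        Nat.gcd (Nat.gcd (x i) (y i)) (p i) = 1)
    (α : Fin k → ℕ) (hα : ∀ i, 0 < α i)
    (u : ℂ) (hu : u = 1 ∨ u = -1)
    (ε : Fin k → ℤ) (hε : ∀ i, ε i = 1 ∨ ε i = -1)
    (a b c : ℕ) (ha : 0 < a) (hb : 0 < b) (hc : 0 < c)
    (habc : a ^ 2 + D * b ^ 2 = c ^ 2) (hgcd : Nat.gcd (Nat.gcd a b) c = 1)
    (s t : ℤ) (hs : s = 1 ∨ s = -1) (ht : t = 1 ∨ t = -1)
    (hz : u * ∏ i,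
        (((x i : ℂ) + (y i : ℂ) * (Real.sqrt D : ℂ) * Complex.I) / (p i : ℂ)) ^ (ε i * (α i : ℤ))
      = (((s * a : ℤ) : ℂ) + ((t * b : ℤ) : ℂ) * (Real.sqrt D : ℂ) * Complex.I) / (c : ℂ)) :
    c = ∏ i, (p i) ^ (α i) :=
  c_of_zeta_product_general D hD k p hp hpodd hpdist hleg x y hxy α u hu ε hε a b c hc habc hgcd s t
    hs ht hz
end
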